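/- arXiv:math-ph/0601006 — 2 statements merged into one kernel-verified Lean document; each statement's English description precedes it below -/
import Mathlib

section
/- Let d ≥ 2 and let Ω be an open subset of ℝ^d. Let u, v : ℝ^d → ℝ be C² on Ω and satisfy the Helmholtz equations −Δu = E_u·u and −Δv = E_v·v on Ω with E_u ≠ E_v. Set ε := E_u − E_v and 𝓔 := E_u + E_v, and define the vector field F : Ω → ℝ^d by F(x) = ((d−2)/2)(v(x)∇u(x) + u(x)∇v(x)) + (𝓔/ε − (ε/4)‖x‖²)(v(x)∇u(x) − u(x)∇v(x)) + ((𝓔/2)u(x)v(x) − ⟨∇u(x),∇v(x)⟩)·x + ⟨x,∇u(x)⟩∇v(x) + ⟨x,∇v(x)⟩∇u(x). Then for every x ∈ Ω, div F(x) = (ε²/4)·‖x‖²·u(x)·v(x). -/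
open MeasureTheory
open scoped RealInnerProductSpace Classical

noncomputable section

/-- The Euclidean Laplacian: the sum of the second partial derivatives. -/
def lap {d : ℕ} (u : EuclideanSpace ℝ (Fin d) → ℝ) (x : EuclideanSpace ℝ (Fin d)) : ℝ :=
  ∑ i, fderiv ℝ (fun y => fderiv ℝ u y (EuclideanSpace.single i (1:ℝ))) x
    (EuclideanSpace.single i (1:ℝ))

/-- The divergence: the sum of the partial derivatives of the components. -/
def divg {d : ℕ} (F : EuclideanSpace ℝ (Fin d) → EuclideanSpace ℝ (Fin d))
    (x : EuclideanSpace ℝ (Fin d)) : ℝ :=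
  ∑ i, fderiv ℝ (fun y => ⟪F y, EuclideanSpace.single i (1:ℝ)⟫) x
    (EuclideanSpace.single i (1:ℝ))

/-!
Expanding `div F` with the product rules `div (f • G) = ⟪∇f, G⟫ + f div G` and `div (f • ∇g) =
⟪∇f, ∇g⟫ + f Δg` leaves the values of `u`, `v`, their gradients, their Laplacians and the Hessian
terms `⟪x, D∇u (∇v)⟫`, `⟪x, D∇v (∇u)⟫`. The Hessian terms come once from `⟪y, ∇u⟫ ∇v + ⟪y, ∇v⟫ ∇u`
and once, with the opposite sign, from `∇⟪∇u, ∇v⟫`, so they cancel by the symmetry of second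
derivatives. After the Helmholtz equations replace `Δu` and `Δv`, the coefficients of `⟪∇u, ∇v⟫`,
`u v`, `v ⟪x, ∇u⟫` and `u ⟪x, ∇v⟫` vanish by the choice of the constants, and only the term
`(ε² / 4) ‖x‖² u v` coming from the weight `𝓔/ε - (ε/4) ‖y‖²` survives.
-/

section Hessian

variable {E : Type*} [NormedAddCommGroup E] [InnerProductSpace ℝ E] [CompleteSpace E]
  {u v : E → ℝ} {x : E}

theorem ContDiffAt.differentiableAt_gradient (hu : ContDiffAt ℝ 2 u x) :
    DifferentiableAt ℝ (gradient u) x :=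
  (InnerProductSpace.toDual ℝ E).symm.toContinuousLinearEquiv.differentiableAt.comp x
    ((hu.fderiv_right (m := 1) le_rfl).differentiableAt one_ne_zero)

theorem ContDiffAt.inner_fderiv_gradient (hu : ContDiffAt ℝ 2 u x) (w z : E) :
    ⟪fderiv ℝ (gradient u) x w, z⟫ = fderiv ℝ (fderiv ℝ u) x w z := by
  have hDu : DifferentiableAt ℝ (fderiv ℝ u) x :=
    (hu.fderiv_right (m := 1) le_rfl).differentiableAt one_ne_zero
  have h := fderiv_inner_apply ℝ hu.differentiableAt_gradient (differentiableAt_const z) w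
  simp only [inner_gradient_left] at h
  rw [fderiv_clm_apply hDu (differentiableAt_const z)] at h
  simpa using h.symm

theorem ContDiffAt.inner_fderiv_gradient_comm (hu : ContDiffAt ℝ 2 u x) (w z : E) :
    ⟪fderiv ℝ (gradient u) x w, z⟫ = ⟪w, fderiv ℝ (gradient u) x z⟫ := by
  rw [real_inner_comm _ w, hu.inner_fderiv_gradient, hu.inner_fderiv_gradient,
    hu.isSymmSndFDerivAt (by simp [minSmoothness_of_isRCLikeNormedField])]

theorem ContDiffAt.fderiv_inner_gradient_apply (hu : ContDiffAt ℝ 2 u x)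
    (hv : ContDiffAt ℝ 2 v x) (w : E) :
    fderiv ℝ (fun y => ⟪gradient u y, gradient v y⟫) x w =
      ⟪w, fderiv ℝ (gradient u) x (gradient v x)⟫ + ⟪w, fderiv ℝ (gradient v) x (gradient u x)⟫ := by
  rw [fderiv_inner_apply ℝ hu.differentiableAt_gradient hv.differentiableAt_gradient,
    real_inner_comm, hv.inner_fderiv_gradient_comm, hu.inner_fderiv_gradient_comm, add_comm]

end Hessian

theorem fderiv_const_sub_mul_norm_sq {E : Type*} [NormedAddCommGroup E] [InnerProductSpace ℝ E]
    (a k : ℝ) (x w : E) :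
    fderiv ℝ (fun y => a - k * ‖y‖ ^ 2) x w = -(2 * k) * ⟪x, w⟫ := by
  rw [fderiv_const_sub, fderiv_const_mul (differentiableAt_fun_id.norm_sq ℝ), fderiv_norm_sq_apply]
  simp only [neg_apply, smul_apply, innerSL_apply_apply, smul_eq_mul, nsmul_eq_mul]
  ring

section Divergence

variable {d : ℕ} {F G : EuclideanSpace ℝ (Fin d) → EuclideanSpace ℝ (Fin d)}
  {f g : EuclideanSpace ℝ (Fin d) → ℝ} {x : EuclideanSpace ℝ (Fin d)}

theorem divg_eq_trace_fderiv (hF : DifferentiableAt ℝ F x) :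
    divg F x = LinearMap.trace ℝ (EuclideanSpace ℝ (Fin d)) (fderiv ℝ F x).toLinearMap := by
  rw [LinearMap.trace_eq_sum_inner _ (EuclideanSpace.basisFun (Fin d) ℝ), divg]
  refine Finset.sum_congr rfl fun i _ => ?_
  rw [fderiv_inner_apply ℝ hF (differentiableAt_const _)]
  simp [real_inner_comm]

theorem divg_add (hF : DifferentiableAt ℝ F x) (hG : DifferentiableAt ℝ G x) :
    divg (fun y => F y + G y) x = divg F x + divg G x := by
  rw [divg_eq_trace_fderiv (hF.fun_add hG), divg_eq_trace_fderiv hF, divg_eq_trace_fderiv hG,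
    fderiv_fun_add hF hG, ContinuousLinearMap.toLinearMap_add, map_add]

theorem divg_sub (hF : DifferentiableAt ℝ F x) (hG : DifferentiableAt ℝ G x) :
    divg (fun y => F y - G y) x = divg F x - divg G x := by
  rw [divg_eq_trace_fderiv (hF.fun_sub hG), divg_eq_trace_fderiv hF, divg_eq_trace_fderiv hG,
    fderiv_fun_sub hF hG, ContinuousLinearMap.toLinearMap_sub, map_sub]

theorem divg_smul (hf : DifferentiableAt ℝ f x) (hG : DifferentiableAt ℝ G x) :
    divg (fun y => f y • G y) x = fderiv ℝ f x (G x) + f x * divg G x := by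
  rw [divg_eq_trace_fderiv (hf.fun_smul hG), divg_eq_trace_fderiv hG, fderiv_fun_smul hf hG,
    ContinuousLinearMap.toLinearMap_add, map_add, ContinuousLinearMap.toLinearMap_smul, map_smul,
    ContinuousLinearMap.coe_smulRight, LinearMap.trace_smulRight, smul_eq_mul, add_comm]
  rfl

theorem divg_const_smul (c : ℝ) (hG : DifferentiableAt ℝ G x) :
    divg (fun y => c • G y) x = c * divg G x := by
  simpa using divg_smul (differentiableAt_const c) hG

theorem divg_id : divg (fun y => y) x = d := by
  rw [divg_eq_trace_fderiv differentiableAt_fun_id, fderiv_fun_id]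
  simp

theorem divg_gradient : divg (gradient f) x = lap f x := by
  simp only [divg, lap, inner_gradient_left]

theorem divg_smul_gradient (hf : DifferentiableAt ℝ f x)
    (hg : DifferentiableAt ℝ (gradient g) x) :
    divg (fun y => f y • gradient g y) x = ⟪gradient f x, gradient g x⟫ + f x * lap g x := by
  rw [divg_smul hf hg, divg_gradient, inner_gradient_left]

theorem divg_inner_gradient_smul_gradient (hf : DifferentiableAt ℝ (gradient f) x)
    (hg : DifferentiableAt ℝ (gradient g) x) :
    divg (fun y => ⟪y, gradient f y⟫ • gradient g y) x =
      ⟪gradient f x, gradient g x⟫ + ⟪x, fderiv ℝ (gradient f) x (gradient g x)⟫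
        + ⟪x, gradient f x⟫ * lap g x := by
  rw [divg_smul (differentiableAt_fun_id.inner ℝ hf) hg, divg_gradient,
    fderiv_inner_apply ℝ differentiableAt_fun_id hf, fderiv_fun_id]
  simp only [ContinuousLinearMap.id_apply, real_inner_comm (gradient g x)]
  ring

end Divergence

attribute [local fun_prop] DifferentiableAt.inner

theorem divergence_identity_unequal_energies_general
    (d : ℕ) (Ω : Set (EuclideanSpace ℝ (Fin d))) (hΩ : IsOpen Ω)
    (u v : EuclideanSpace ℝ (Fin d) → ℝ) (Eu Ev : ℝ) (hne : Eu ≠ Ev)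
    (hu : ContDiffOn ℝ 2 u Ω) (hv : ContDiffOn ℝ 2 v Ω)
    (hHu : ∀ x ∈ Ω, -lap u x = Eu * u x) (hHv : ∀ x ∈ Ω, -lap v x = Ev * v x) :
    ∀ x ∈ Ω,
      divg (fun y =>
          (((d : ℝ) - 2) / 2) • (v y • gradient u y + u y • gradient v y)
          + ((Eu + Ev) / (Eu - Ev) - (Eu - Ev) / 4 * ‖y‖ ^ 2) •
              (v y • gradient u y - u y • gradient v y)
          + ((Eu + Ev) / 2 * u y * v y - ⟪gradient u y, gradient v y⟫) • y
          + ⟪y, gradient u y⟫ • gradient v y + ⟪y, gradient v y⟫ • gradient u y) x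
        = (Eu - Ev) ^ 2 / 4 * ‖x‖ ^ 2 * u x * v x := by
  intro x hx
  have hu2 : ContDiffAt ℝ 2 u x := hu.contDiffAt (hΩ.mem_nhds hx)
  have hv2 : ContDiffAt ℝ 2 v x := hv.contDiffAt (hΩ.mem_nhds hx)
  have hu1 := hu2.differentiableAt two_ne_zero
  have hv1 := hv2.differentiableAt two_ne_zero
  have hgu := hu2.differentiableAt_gradient
  have hgv := hv2.differentiableAt_gradient
  have hnorm : DifferentiableAt ℝ (fun y : EuclideanSpace ℝ (Fin d) => ‖y‖ ^ 2) x :=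
    differentiableAt_fun_id.norm_sq ℝ
  rw [divg_add (by fun_prop) (by fun_prop), divg_add (by fun_prop) (by fun_prop),
    divg_add (by fun_prop) (by fun_prop), divg_add (by fun_prop) (by fun_prop),
    divg_inner_gradient_smul_gradient hgu hgv, divg_inner_gradient_smul_gradient hgv hgu,
    divg_const_smul _ (by fun_prop), divg_add (by fun_prop) (by fun_prop),
    divg_smul_gradient hv1 hgu, divg_smul_gradient hu1 hgv,
    divg_smul (by fun_prop) (by fun_prop), divg_sub (by fun_prop) (by fun_prop),
    divg_smul_gradient hv1 hgu, divg_smul_gradient hu1 hgv,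
    divg_smul (by fun_prop) differentiableAt_fun_id, divg_id,
    fderiv_const_sub_mul_norm_sq, fderiv_fun_sub (by fun_prop) (by fun_prop), sub_apply,
    fderiv_fun_mul (by fun_prop) hv1, fderiv_const_mul hu1, hu2.fderiv_inner_gradient_apply hv2,
    neg_eq_iff_eq_neg.mp (hHu x hx), neg_eq_iff_eq_neg.mp (hHv x hx)]
  simp only [add_apply, smul_apply, smul_eq_mul, inner_sub_right, inner_smul_right,
    ← inner_gradient_left, real_inner_comm x, real_inner_comm (gradient v x) (gradient u x)]
  field_simp [sub_ne_zero.mpr hne]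
  ring

theorem divergence_identity_unequal_energies
    (d : ℕ) (hd : 2 ≤ d) (Ω : Set (EuclideanSpace ℝ (Fin d))) (hΩ : IsOpen Ω)
    (u v : EuclideanSpace ℝ (Fin d) → ℝ) (Eu Ev : ℝ) (hne : Eu ≠ Ev)
    (hu : ContDiffOn ℝ 2 u Ω) (hv : ContDiffOn ℝ 2 v Ω)
    (hHu : ∀ x ∈ Ω, -lap u x = Eu * u x) (hHv : ∀ x ∈ Ω, -lap v x = Ev * v x) :
    ∀ x ∈ Ω,
      divg (fun y =>
          (((d : ℝ) - 2) / 2) • (v y • gradient u y + u y • gradient v y)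
          + ((Eu + Ev) / (Eu - Ev) - (Eu - Ev) / 4 * ‖y‖ ^ 2) •
              (v y • gradient u y - u y • gradient v y)
          + ((Eu + Ev) / 2 * u y * v y - ⟪gradient u y, gradient v y⟫) • y
          + ⟪y, gradient u y⟫ • gradient v y + ⟪y, gradient v y⟫ • gradient u y) x
        = (Eu - Ev) ^ 2 / 4 * ‖x‖ ^ 2 * u x * v x :=
  divergence_identity_unequal_energies_general d Ω hΩ u v Eu Ev hne hu hv hHu hHv
end
end

section
/- Let Ω, ∂Ω, σ, n, q be as in the context, and assume in addition that Ω is contained in the closed ball of radius R > 0 centered at the origin. Let φ, ψ : ℝ^d → ℝ be C² on a neighborhood of the closure of Ω, satisfying −Δφ = E_φ·φ and −Δψ = E_ψ·ψ on Ω, with ∫_Ω φ(x)² dx = 1, ∫_Ω ψ(x)² dx = 1 and ∫_Ω φ(x)·ψ(x) dx = 0. Assume both φ and ψ satisfy the mixed homogeneous boundary conditions: there are a subset Γ_D ⊆ ∂Ω and a function γ : ∂Ω → ℝ such that φ and ψ vanish on Γ_D and γ(x)·φ(x) + ⟨n(x),∇φ(x)⟩ = 0 and γ(x)·ψ(x)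 + ⟨n(x),∇ψ(x)⟩ = 0 for all x ∈ ∂Ω ∖ Γ_D. Then |q(φ,ψ; E_φ+E_ψ)| ≤ (R²/4)·(E_φ − E_ψ)². -/
/-!
With `c = (E_φ - E_ψ)/2`, the boundary form `q(φ, ψ; E_φ + E_ψ)` is the flux of the Rellich
field `R`, whose divergence, by the eigenvalue equations, is
`(E_φ + E_ψ) φψ + c (ψ ⟨x, ∇φ⟩ - φ ⟨x, ∇ψ⟩)`. The weighted Wronskian `(|x|²/2)(ψ∇φ - φ∇ψ)` has no
normal flux under the common mixed boundary conditions and divergence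
`ψ ⟨x, ∇φ⟩ - φ ⟨x, ∇ψ⟩ - c |x|² φψ`. Gauss–Green applied to `R` minus `c` times this field, together
with orthogonality, gives `q = c² ∫_Ω |x|² φψ`, and `2 |φψ| ≤ φ² + ψ²`, `|x| ≤ R` and the
normalisation bound the integral by `R²`.
-/

open MeasureTheory
open scoped RealInnerProductSpace Classical

noncomputable section

/-- The boundary bilinear form `q(u, v; 𝓔)`. -/
def qform (d : ℕ) (Ω : Set (EuclideanSpace ℝ (Fin d)))
    (n : EuclideanSpace ℝ (Fin d) → EuclideanSpace ℝ (Fin d))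
    (u v : EuclideanSpace ℝ (Fin d) → ℝ) (cE : ℝ) : ℝ :=
  ∫ x in frontier Ω,
    (((d : ℝ) - 2) / 2 * (⟪n x, gradient u x⟫ * v x + ⟪n x, gradient v x⟫ * u x)
      + ⟪x, n x⟫ * (cE / 2 * u x * v x - ⟪gradient u x, gradient v x⟫)
      + ⟪x, gradient u x⟫ * ⟪n x, gradient v x⟫
      + ⟪x, gradient v x⟫ * ⟪n x, gradient u x⟫) ∂(μH[(d:ℝ) - 1])

namespace QuasiOrthogonality

variable {d : ℕ}

local notation "ℝᵈ" => EuclideanSpace ℝ (Fin d)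

local notation "e" i => EuclideanSpace.single i (1 : ℝ)

lemma gradient_apply (u : ℝᵈ → ℝ) (y : ℝᵈ) (i : Fin d) :
    gradient u y i = fderiv ℝ u y (e i) := by
  rw [← inner_gradient_left, EuclideanSpace.inner_single_right]
  simp

lemma contDiffAt_gradient {n m : WithTop ℕ∞} {u : ℝᵈ → ℝ} {x : ℝᵈ} (hu : ContDiffAt ℝ n u x)
    (hmn : m + 1 ≤ n) : ContDiffAt ℝ m (gradient u) x := by
  refine contDiffAt_piLp' 2 fun i => ?_
  simp only [gradient_apply]
  exact (hu.fderiv_right hmn).clm_apply contDiffAt_const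

lemma contDiffOn_gradient {n m : WithTop ℕ∞} {u : ℝᵈ → ℝ} {U : Set ℝᵈ} (hU : IsOpen U)
    (hu : ContDiffOn ℝ n u U) (hmn : m + 1 ≤ n) : ContDiffOn ℝ m (gradient u) U :=
  fun _ hx => (contDiffAt_gradient (hu.contDiffAt (hU.mem_nhds hx)) hmn).contDiffWithinAt

lemma differentiableAt_gradient {u : ℝᵈ → ℝ} {x : ℝᵈ} (hu : ContDiffAt ℝ 2 u x) :
    DifferentiableAt ℝ (gradient u) x :=
  (contDiffAt_gradient (m := 1) hu (by norm_num)).differentiableAt one_ne_zero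

lemma inner_fderiv_gradient_comm {u : ℝᵈ → ℝ} {x : ℝᵈ} (hu : ContDiffAt ℝ 2 u x) (v w : ℝᵈ) :
    ⟪fderiv ℝ (gradient u) x v, w⟫ = ⟪v, fderiv ℝ (gradient u) x w⟫ := by
  have hessian : ∀ a b, ⟪fderiv ℝ (gradient u) x a, b⟫ = fderiv ℝ (fderiv ℝ u) x a b := by
    intro a b
    have hfd : DifferentiableAt ℝ (fderiv ℝ u) x :=
      (hu.fderiv_right (m := 1) (by norm_num)).differentiableAt one_ne_zero
    calc ⟪fderiv ℝ (gradient u) x a, b⟫ = fderiv ℝ (fun y => ⟪gradient u y, b⟫) x a := by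
          rw [fderiv_inner_apply ℝ (differentiableAt_gradient hu) (differentiableAt_const b)]
          simp
      _ = fderiv ℝ (fun y => fderiv ℝ u y b) x a := by simp only [inner_gradient_left]
      _ = fderiv ℝ (fderiv ℝ u) x a b := by
          rw [fderiv_clm_apply hfd (differentiableAt_const b)]
          simp
  rw [hessian, real_inner_comm, hessian]
  exact hu.isSymmSndFDerivAt (by simp) v w

lemma sum_apply_mul_inner_single (L : ℝᵈ →L[ℝ] ℝ) (w : ℝᵈ) :
    ∑ i, L (e i) * ⟪w, e i⟫ = L w := by
  conv_rhs => rw [← (EuclideanSpace.basisFun (Fin d) ℝ).sum_repr' w]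
  simp [map_sum, real_inner_comm, mul_comm]

lemma divg_eq_sum {F : ℝᵈ → ℝᵈ} {x : ℝᵈ} (hF : DifferentiableAt ℝ F x) :
    divg F x = ∑ i, ⟪fderiv ℝ F x (e i), e i⟫ := by
  refine Finset.sum_congr rfl fun i _ => ?_
  rw [fderiv_inner_apply ℝ hF (differentiableAt_const _)]
  simp

lemma divg_add {F G : ℝᵈ → ℝᵈ} {x : ℝᵈ} (hF : DifferentiableAt ℝ F x)
    (hG : DifferentiableAt ℝ G x) : divg (fun y => F y + G y) x = divg F x + divg G x := by
  simp only [divg_eq_sum (F := fun y => F y + G y) (hF.add hG), divg_eq_sum hF, divg_eq_sum hG,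
    fderiv_fun_add hF hG, add_apply, inner_add_left, Finset.sum_add_distrib]

lemma divg_sub {F G : ℝᵈ → ℝᵈ} {x : ℝᵈ} (hF : DifferentiableAt ℝ F x)
    (hG : DifferentiableAt ℝ G x) : divg (fun y => F y - G y) x = divg F x - divg G x := by
  simp only [divg_eq_sum (F := fun y => F y - G y) (hF.sub hG), divg_eq_sum hF, divg_eq_sum hG,
    fderiv_fun_sub hF hG, sub_apply, inner_sub_left, Finset.sum_sub_distrib]

lemma divg_smul {a : ℝᵈ → ℝ} {G : ℝᵈ → ℝᵈ} {x : ℝᵈ} (ha : DifferentiableAt ℝ a x)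
    (hG : DifferentiableAt ℝ G x) :
    divg (fun y => a y • G y) x = a x * divg G x + fderiv ℝ a x (G x) := by
  simp only [divg_eq_sum (F := fun y => a y • G y) (ha.smul hG), divg_eq_sum hG,
    fderiv_fun_smul ha hG, add_apply, smul_apply, ContinuousLinearMap.smulRight_apply,
    inner_add_left, real_inner_smul_left, Finset.sum_add_distrib, ← Finset.mul_sum,
    sum_apply_mul_inner_single]

lemma divg_gradient (u : ℝᵈ → ℝ) : divg (gradient u) = lap u := by
  ext x
  simp only [divg, lap, inner_gradient_left]

lemma divg_id (x : ℝᵈ) : divg (fun y => y) x = d := by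
  rw [divg_eq_sum differentiableAt_fun_id]
  simp

lemma hasFDerivAt_half_sq_norm {E : Type*} [NormedAddCommGroup E] [InnerProductSpace ℝ E]
    (x : E) :
    HasFDerivAt (fun y : E => ‖y‖ ^ 2 / 2) (innerSL ℝ x) x := by
  have h : HasFDerivAt (fun y : E => ‖y‖ ^ 2) (2 • innerSL ℝ x) x :=
    (hasStrictFDerivAt_norm_sq x).hasFDerivAt
  have h2 := h.mul_const (1 / 2 : ℝ)
  simp only [mul_one_div] at h2
  refine h2.congr_fderiv ?_
  ext w
  simp

lemma divg_smul_gradient {a u : ℝᵈ → ℝ} {x : ℝᵈ} (ha : DifferentiableAt ℝ a x)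
    (hu : ContDiffAt ℝ 2 u x) :
    divg (fun y => a y • gradient u y) x = a x * lap u x + fderiv ℝ a x (gradient u x) := by
  rw [divg_smul ha (differentiableAt_gradient hu), divg_gradient]

lemma divg_inner_smul_gradient {u v : ℝᵈ → ℝ} {x : ℝᵈ} (hu : ContDiffAt ℝ 2 u x)
    (hv : ContDiffAt ℝ 2 v x) :
    divg (fun y => ⟪y, gradient u y⟫ • gradient v y) x = ⟪x, gradient u x⟫ * lap v x
      + (⟪x, fderiv ℝ (gradient u) x (gradient v x)⟫ + ⟪gradient v x, gradient u x⟫) := by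
  have hgu := differentiableAt_gradient hu
  rw [divg_smul_gradient (differentiableAt_fun_id.inner ℝ hgu) hv,
    fderiv_inner_apply ℝ differentiableAt_fun_id hgu]
  simp only [fderiv_fun_id, ContinuousLinearMap.coe_id', id_eq]

lemma divg_smul_id {a : ℝᵈ → ℝ} {x : ℝᵈ} (ha : DifferentiableAt ℝ a x) :
    divg (fun y => a y • y) x = d * a x + fderiv ℝ a x x := by
  rw [divg_smul ha differentiableAt_fun_id, divg_id, mul_comm]

attribute [local fun_prop] DifferentiableAt.inner ContDiffOn.inner

def rellichField (u v : ℝᵈ → ℝ) (cE : ℝ) (y : ℝᵈ) : ℝᵈ :=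
  ⟪y, gradient u y⟫ • gradient v y + ⟪y, gradient v y⟫ • gradient u y
    + (cE / 2 * (u y * v y) - ⟪gradient u y, gradient v y⟫) • y
    + (((d : ℝ) - 2) / 2 * v y) • gradient u y + (((d : ℝ) - 2) / 2 * u y) • gradient v y

lemma divg_rellichField {u v : ℝᵈ → ℝ} (cE : ℝ) {x : ℝᵈ} (hu : ContDiffAt ℝ 2 u x)
    (hv : ContDiffAt ℝ 2 v x) :
    divg (rellichField u v cE) x
      = cE / 2 * (d * (u x * v x) + v x * ⟪x, gradient u x⟫ + u x * ⟪x, gradient v x⟫)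
        + ⟪x, gradient u x⟫ * lap v x + ⟪x, gradient v x⟫ * lap u x
        + ((d : ℝ) - 2) / 2 * (v x * lap u x + u x * lap v x) := by
  have hud : DifferentiableAt ℝ u x := hu.differentiableAt two_ne_zero
  have hvd : DifferentiableAt ℝ v x := hv.differentiableAt two_ne_zero
  have hgu := differentiableAt_gradient hu
  have hgv := differentiableAt_gradient hv
  have hweight :
      DifferentiableAt ℝ (fun y => cE / 2 * (u y * v y) - ⟪gradient u y, gradient v y⟫) x := by
    fun_prop
  have hdweight : fderiv ℝ (fun y => cE / 2 * (u y * v y) - ⟪gradient u y, gradient v y⟫) x x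
      = cE / 2 * (v x * ⟪x, gradient u x⟫ + u x * ⟪x, gradient v x⟫)
        - (⟪x, fderiv ℝ (gradient u) x (gradient v x)⟫
          + ⟪x, fderiv ℝ (gradient v) x (gradient u x)⟫) := by
    rw [fderiv_fun_sub (by fun_prop) (by fun_prop), fderiv_const_mul (by fun_prop),
      fderiv_fun_mul hud hvd, sub_apply, fderiv_inner_apply ℝ hgu hgv]
    simp only [smul_apply, add_apply, smul_eq_mul, ← inner_gradient_left,
      inner_fderiv_gradient_comm hu, real_inner_comm x]
    rw [← real_inner_comm (gradient u x), inner_fderiv_gradient_comm hv]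
    ring
  unfold rellichField
  rw [divg_add (by fun_prop) (by fun_prop), divg_add (by fun_prop) (by fun_prop),
    divg_add (by fun_prop) (by fun_prop), divg_add (by fun_prop) (by fun_prop),
    divg_inner_smul_gradient hu hv, divg_inner_smul_gradient hv hu, divg_smul_id hweight,
    hdweight, divg_smul_gradient (by fun_prop) hu, divg_smul_gradient (by fun_prop) hv,
    fderiv_const_mul hvd, fderiv_const_mul hud]
  simp only [smul_apply, smul_eq_mul, ← inner_gradient_left, real_inner_comm (gradient u x)]
  ring

def wronskian (u v : ℝᵈ → ℝ) (y : ℝᵈ) : ℝᵈ := v y • gradient u y - u y • gradient v y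

lemma divg_wronskian {u v : ℝᵈ → ℝ} {x : ℝᵈ} (hu : ContDiffAt ℝ 2 u x)
    (hv : ContDiffAt ℝ 2 v x) : divg (wronskian u v) x = v x * lap u x - u x * lap v x := by
  have hud : DifferentiableAt ℝ u x := hu.differentiableAt two_ne_zero
  have hvd : DifferentiableAt ℝ v x := hv.differentiableAt two_ne_zero
  have hgu := differentiableAt_gradient hu
  have hgv := differentiableAt_gradient hv
  unfold wronskian
  rw [divg_sub (by fun_prop) (by fun_prop), divg_smul_gradient hvd hu, divg_smul_gradient hud hv,
    ← inner_gradient_left, ← inner_gradient_left, real_inner_comm]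
  ring

def multiplierField (u v : ℝᵈ → ℝ) (Eu Ev : ℝ) (y : ℝᵈ) : ℝᵈ :=
  rellichField u v (Eu + Ev) y - ((Eu - Ev) / 2 * (‖y‖ ^ 2 / 2)) • wronskian u v y

lemma divg_multiplierField {u v : ℝᵈ → ℝ} {Eu Ev : ℝ} {x : ℝᵈ} (hu : ContDiffAt ℝ 2 u x)
    (hv : ContDiffAt ℝ 2 v x) (hlu : lap u x = -(Eu * u x)) (hlv : lap v x = -(Ev * v x)) :
    divg (multiplierField u v Eu Ev) x
      = (Eu + Ev) * (u x * v x) + ((Eu - Ev) / 2) ^ 2 * (‖x‖ ^ 2 * (u x * v x)) := by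
  have hud : DifferentiableAt ℝ u x := hu.differentiableAt two_ne_zero
  have hvd : DifferentiableAt ℝ v x := hv.differentiableAt two_ne_zero
  have hgu := differentiableAt_gradient hu
  have hgv := differentiableAt_gradient hv
  have hweight := (hasFDerivAt_half_sq_norm x).const_mul ((Eu - Ev) / 2)
  have hR : DifferentiableAt ℝ (rellichField u v (Eu + Ev)) x := by
    unfold rellichField
    fun_prop
  have hW : DifferentiableAt ℝ (wronskian u v) x := by
    unfold wronskian
    fun_prop
  unfold multiplierField
  rw [divg_sub (G := fun y => ((Eu - Ev) / 2 * (‖y‖ ^ 2 / 2)) • wronskian u v y) hR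
      (hweight.differentiableAt.smul hW), divg_rellichField _ hu hv,
    divg_smul hweight.differentiableAt hW, hweight.fderiv, divg_wronskian hu hv, hlu, hlv]
  simp only [smul_apply, smul_eq_mul, innerSL_apply_apply, wronskian, inner_sub_right,
    real_inner_smul_right]
  ring

lemma contDiffOn_multiplierField {u v : ℝᵈ → ℝ} (Eu Ev : ℝ) {U : Set ℝᵈ} (hU : IsOpen U)
    (hu : ContDiffOn ℝ 2 u U) (hv : ContDiffOn ℝ 2 v U) :
    ContDiffOn ℝ 1 (multiplierField u v Eu Ev) U := by
  have hgu := contDiffOn_gradient (m := 1) hU hu (by norm_num)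
  have hgv := contDiffOn_gradient (m := 1) hU hv (by norm_num)
  have hu1 : ContDiffOn ℝ 1 u U := hu.of_le one_le_two
  have hv1 : ContDiffOn ℝ 1 v U := hv.of_le one_le_two
  have hsq : ContDiffOn ℝ 1 (fun y : ℝᵈ => ‖y‖ ^ 2) U := (contDiff_norm_sq ℝ).contDiffOn
  unfold multiplierField rellichField wronskian
  fun_prop

lemma inner_wronskian_eq_zero {u v : ℝᵈ → ℝ} {ν : ℝᵈ → ℝᵈ} {γ : ℝᵈ → ℝ} {S Γ : Set ℝᵈ}
    (hD : ∀ x ∈ Γ, u x = 0 ∧ v x = 0)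
    (hR : ∀ x ∈ S \ Γ,
      γ x * u x + ⟪ν x, gradient u x⟫ = 0 ∧ γ x * v x + ⟪ν x, gradient v x⟫ = 0)
    {x : ℝᵈ} (hx : x ∈ S) : ⟪wronskian u v x, ν x⟫ = 0 := by
  rw [wronskian, inner_sub_left, real_inner_smul_left, real_inner_smul_left,
    real_inner_comm (ν x), real_inner_comm (ν x)]
  by_cases hxΓ : x ∈ Γ
  · rw [(hD x hxΓ).1, (hD x hxΓ).2]
    ring
  · obtain ⟨hu, hv⟩ := hR x ⟨hx, hxΓ⟩
    rw [eq_neg_of_add_eq_zero_right hu, eq_neg_of_add_eq_zero_right hv]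
    ring

lemma qform_eq_integral_inner_multiplierField {Ω : Set ℝᵈ} {n : ℝᵈ → ℝᵈ} {u v : ℝᵈ → ℝ}
    (Eu Ev : ℝ) (hW : ∀ x ∈ frontier Ω, ⟪wronskian u v x, n x⟫ = 0) :
    qform d Ω n u v (Eu + Ev)
      = ∫ x in frontier Ω, ⟪multiplierField u v Eu Ev x, n x⟫ ∂(μH[(d:ℝ) - 1]) := by
  refine setIntegral_congr_fun isClosed_frontier.measurableSet fun x hx => ?_
  rw [multiplierField, inner_sub_left, real_inner_smul_left, hW x hx, rellichField]
  simp only [inner_add_left, real_inner_smul_left]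
  rw [real_inner_comm (gradient u x) (n x), real_inner_comm (gradient v x) (n x)]
  ring

lemma abs_setIntegral_sq_norm_mul_le {E : Type*} [NormedAddCommGroup E] [MeasurableSpace E]
    {μ : Measure E} {s : Set E} (hs : MeasurableSet s) {R : ℝ}
    (hsR : s ⊆ Metric.closedBall 0 R) {f g : E → ℝ} (hf : IntegrableOn (fun x => f x ^ 2) s μ)
    (hg : IntegrableOn (fun x => g x ^ 2) s μ) :
    |∫ x in s, ‖x‖ ^ 2 * (f x * g x) ∂μ|
      ≤ R ^ 2 / 2 * (∫ x in s, f x ^ 2 ∂μ + ∫ x in s, g x ^ 2 ∂μ) := by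
  rw [← Real.norm_eq_abs, ← integral_add hf hg, ← integral_const_mul]
  refine norm_integral_le_of_norm_le ((hf.add hg).const_mul _) (ae_restrict_of_forall_mem hs ?_)
  intro x hx
  have hxR : ‖x‖ ^ 2 ≤ R ^ 2 :=
    pow_le_pow_left₀ (norm_nonneg x) (mem_closedBall_zero_iff.1 (hsR hx)) 2
  have hfg : |f x * g x| ≤ (f x ^ 2 + g x ^ 2) / 2 := by
    rw [abs_le]
    constructor <;> nlinarith [sq_nonneg (f x + g x), sq_nonneg (f x - g x)]
  rw [Real.norm_eq_abs, abs_mul, abs_of_nonneg (by positivity), div_mul_eq_mul_div, mul_div_assoc]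
  exact mul_le_mul hxR hfg (abs_nonneg _) (sq_nonneg R)

end QuasiOrthogonality

open QuasiOrthogonality in
theorem quasi_orthogonality_bound_general
    (d : ℕ) (Ω : Set (EuclideanSpace ℝ (Fin d)))
    (hΩo : IsOpen Ω) (hΩb : Bornology.IsBounded Ω)
    (n : EuclideanSpace ℝ (Fin d) → EuclideanSpace ℝ (Fin d))
    (R : ℝ) (hΩR : Ω ⊆ Metric.closedBall 0 R)
    (hGG : ∀ F : EuclideanSpace ℝ (Fin d) → EuclideanSpace ℝ (Fin d),
      (∃ U, IsOpen U ∧ closure Ω ⊆ U ∧ ContDiffOn ℝ 1 F U) →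
      (∫ x in Ω, divg F x) = ∫ x in frontier Ω, ⟪F x, n x⟫ ∂(μH[(d:ℝ) - 1]))
    (φ ψ : EuclideanSpace ℝ (Fin d) → ℝ) (Eφ Eψ : ℝ)
    (hφr : ∃ U, IsOpen U ∧ closure Ω ⊆ U ∧ ContDiffOn ℝ 2 φ U) (hψr : ∃ U, IsOpen U ∧ closure Ω ⊆ U ∧ ContDiffOn ℝ 2 ψ U)
    (hHφ : ∀ x ∈ Ω, -lap φ x = Eφ * φ x) (hHψ : ∀ x ∈ Ω, -lap ψ x = Eψ * ψ x)
    (hφnorm : (∫ x in Ω, (φ x) ^ 2) = 1)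
    (hψnorm : (∫ x in Ω, (ψ x) ^ 2) = 1)
    (horth : (∫ x in Ω, φ x * ψ x) = 0)
    (hbc : ∃ ΓD ⊆ frontier Ω, ∃ γ : EuclideanSpace ℝ (Fin d) → ℝ,
      (∀ x ∈ ΓD, φ x = 0 ∧ ψ x = 0) ∧
      ∀ x ∈ frontier Ω \ ΓD,
        γ x * φ x + ⟪n x, gradient φ x⟫ = 0 ∧
        γ x * ψ x + ⟪n x, gradient ψ x⟫ = 0)
    :
    |qform d Ω n φ ψ (Eφ + Eψ)| ≤ R ^ 2 / 4 * (Eφ - Eψ) ^ 2 := by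
  obtain ⟨U₁, hU₁, hΩU₁, hφ⟩ := hφr
  obtain ⟨U₂, hU₂, hΩU₂, hψ⟩ := hψr
  obtain ⟨ΓD, -, γ, hDir, hRob⟩ := hbc
  have hU : IsOpen (U₁ ∩ U₂) := hU₁.inter hU₂
  have hΩU : closure Ω ⊆ U₁ ∩ U₂ := Set.subset_inter hΩU₁ hΩU₂
  have hφU : ContDiffOn ℝ 2 φ (U₁ ∩ U₂) := hφ.mono Set.inter_subset_left
  have hψU : ContDiffOn ℝ 2 ψ (U₁ ∩ U₂) := hψ.mono Set.inter_subset_right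
  have hsmooth {u : EuclideanSpace ℝ (Fin d) → ℝ} (hu : ContDiffOn ℝ 2 u (U₁ ∩ U₂))
      {x : EuclideanSpace ℝ (Fin d)} (hx : x ∈ Ω) : ContDiffAt ℝ 2 u x :=
    hu.contDiffAt (hU.mem_nhds (hΩU (subset_closure hx)))
  have hφc := hφU.continuousOn
  have hψc := hψU.continuousOn
  have hint {f : EuclideanSpace ℝ (Fin d) → ℝ} (hf : ContinuousOn f (U₁ ∩ U₂)) :
      IntegrableOn f Ω :=
    ((hf.mono hΩU).integrableOn_compact hΩb.isCompact_closure).mono_set subset_closure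
  have hdiv : ∀ x ∈ Ω, divg (multiplierField φ ψ Eφ Eψ) x = (Eφ + Eψ) * (φ x * ψ x)
      + ((Eφ - Eψ) / 2) ^ 2 * (‖x‖ ^ 2 * (φ x * ψ x)) := fun x hx =>
    divg_multiplierField (hsmooth hφU hx) (hsmooth hψU hx) (by linarith [hHφ x hx])
      (by linarith [hHψ x hx])
  have hq : qform d Ω n φ ψ (Eφ + Eψ)
      = ((Eφ - Eψ) / 2) ^ 2 * ∫ x in Ω, ‖x‖ ^ 2 * (φ x * ψ x) := by
    rw [qform_eq_integral_inner_multiplierField Eφ Eψ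
        fun _ hx => inner_wronskian_eq_zero hDir hRob hx,
      ← hGG _ ⟨_, hU, hΩU, contDiffOn_multiplierField Eφ Eψ hU hφU hψU⟩,
      setIntegral_congr_fun hΩo.measurableSet hdiv,
      integral_add (hint (by fun_prop)) (hint (by fun_prop)), integral_const_mul,
      integral_const_mul, horth]
    ring
  have hmoment := abs_setIntegral_sq_norm_mul_le (f := φ) (g := ψ) hΩo.measurableSet hΩR
    (hint (by fun_prop)) (hint (by fun_prop))
  rw [hφnorm, hψnorm] at hmoment
  rw [hq, abs_mul, abs_of_nonneg (sq_nonneg _)]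
  nlinarith [sq_nonneg ((Eφ - Eψ) / 2)]

theorem quasi_orthogonality_bound
    (d : ℕ) (hd : 2 ≤ d) (Ω : Set (EuclideanSpace ℝ (Fin d)))
    (hΩo : IsOpen Ω) (hΩb : Bornology.IsBounded Ω)
    (n : EuclideanSpace ℝ (Fin d) → EuclideanSpace ℝ (Fin d))
    (R : ℝ) (hR : 0 < R) (hΩR : Ω ⊆ Metric.closedBall 0 R)
    (hGG : ∀ F : EuclideanSpace ℝ (Fin d) → EuclideanSpace ℝ (Fin d),
      (∃ U, IsOpen U ∧ closure Ω ⊆ U ∧ ContDiffOn ℝ 1 F U) →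
      (∫ x in Ω, divg F x) = ∫ x in frontier Ω, ⟪F x, n x⟫ ∂(μH[(d:ℝ) - 1]))
    (φ ψ : EuclideanSpace ℝ (Fin d) → ℝ) (Eφ Eψ : ℝ)
    (hφr : ∃ U, IsOpen U ∧ closure Ω ⊆ U ∧ ContDiffOn ℝ 2 φ U) (hψr : ∃ U, IsOpen U ∧ closure Ω ⊆ U ∧ ContDiffOn ℝ 2 ψ U)
    (hHφ : ∀ x ∈ Ω, -lap φ x = Eφ * φ x) (hHψ : ∀ x ∈ Ω, -lap ψ x = Eψ * ψ x)
    (hφnorm : (∫ x in Ω, (φ x) ^ 2) = 1)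
    (hψnorm : (∫ x in Ω, (ψ x) ^ 2) = 1)
    (horth : (∫ x in Ω, φ x * ψ x) = 0)
    (hbc : ∃ ΓD ⊆ frontier Ω, ∃ γ : EuclideanSpace ℝ (Fin d) → ℝ,
      (∀ x ∈ ΓD, φ x = 0 ∧ ψ x = 0) ∧
      ∀ x ∈ frontier Ω \ ΓD,
        γ x * φ x + ⟪n x, gradient φ x⟫ = 0 ∧
        γ x * ψ x + ⟪n x, gradient ψ x⟫ = 0)
    :
    |qform d Ω n φ ψ (Eφ + Eψ)| ≤ R ^ 2 / 4 * (Eφ - Eψ) ^ 2 :=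
  quasi_orthogonality_bound_general d Ω hΩo hΩb n R hΩR hGG φ ψ Eφ Eψ hφr hψr hHφ hHψ hφnorm hψnorm
    horth hbc
end
end
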